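/- arXiv:math/0302006 — 6 statements merged into one kernel-verified Lean document; each statement's English description precedes it below -/
import Mathlib

section
/- Let A → B be an injective map of commutative rings with A local with maximal ideal m, such that B is a finite A-module and an integral domain. The map Φ : Hom_A(B, A) → B defined by Φ(ψ) = image of ψ(1) in B is an injection of B-modules whenever B is torsion-free of rank one over A; moreover, if Φ is surjective then A → B is an isomorphism. -/
/-- Let `A → B` be an injective map of commutative rings with `A` local,
`B` a finite `A`-module and a domain, and suppose `B` is torsion-free of rank one over `A`
(encoded: every `b : B` satisfies `s·b = a` for some `a, s : A`, `s ≠ 0`, i.e. `B` lies in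
the fraction field of `A`).  Then the map `Φ : Hom_A(B, A) → B`, `ψ ↦ algebraMap A B (ψ 1)`,
is `B`-linear (for the `B`-module structure `(b·ψ)(x) = ψ(bx)`, i.e.
`algebraMap A B (ψ b) = b * algebraMap A B (ψ 1)`) and injective; moreover if `Φ` is
surjective then `A → B` is an isomorphism. -/
theorem stmt_1 (A B : Type*) [CommRing A] [IsLocalRing A] [CommRing B] [IsDomain B]
    [Algebra A B] [Module.Finite A B]
    (hinj : Function.Injective (algebraMap A B))
    (hrk : ∀ b : B, ∃ a s : A, s ≠ 0 ∧ algebraMap A B s * b = algebraMap A B a) :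
    (∀ (ψ : B →ₗ[A] A) (b : B), algebraMap A B (ψ b) = b * algebraMap A B (ψ 1)) ∧
    (∀ ψ : B →ₗ[A] A, ψ 1 = 0 → ψ = 0) ∧
    ((∀ b : B, ∃ ψ : B →ₗ[A] A, algebraMap A B (ψ 1) = b) →
      Function.Bijective (algebraMap A B)) := by
  have part1 : ∀ (ψ : B →ₗ[A] A) (b : B),
      algebraMap A B (ψ b) = b * algebraMap A B (ψ 1) := by
    intro ψ b
    obtain ⟨a, s, hs, hab⟩ := hrk b
    have hs' : algebraMap A B s ≠ 0 := fun h => hs (hinj (by simpa using h))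
    have h2 : s • b = a • (1 : B) := by simp [Algebra.smul_def, hab]
    have h3 : s * ψ b = a * ψ 1 := by
      have := congrArg ψ h2
      simpa [map_smul, smul_eq_mul] using this
    have h4 := congrArg (algebraMap A B) h3
    rw [map_mul, map_mul] at h4
    apply mul_left_cancel₀ hs'
    rw [h4, ← hab]; ring
  refine ⟨part1, ?_, ?_⟩
  · intro ψ h
    ext b
    apply hinj
    simp [part1 ψ b, h]
  · intro hsurj
    refine ⟨hinj, ?_⟩
    obtain ⟨ψ, hψ⟩ := hsurj 1
    intro b
    exact ⟨ψ b, by rw [part1 ψ b, hψ, mul_one]⟩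
end

section
/- Let g : ℙ² → ℙ⁴ be given by the degree-3 monomials g = (x₀²x₁, x₁²x₂, x₂²x₀, x₀x₁x₂, g₄) where g₄ is any homogeneous cubic in which x₀³ has nonzero coefficient, and let G = y₄²y₃ + y₄G₂ + G₃ with G₂, G₃ homogeneous of degrees 2, 3 in y₀,…,y₃. Then G(g₀,…,g₄) is not the zero polynomial; more precisely, the coefficient of x₀⁷x₁x₂ in G(g₀,…,g₄) is nonzero. -/
/-!
Give `x₀, x₁, x₂` the weights `2, 0, 1`. Then `g₀, …, g₃` have weight at most `4`, the cubic
`g₄` has weight at most `6`, and `x₀⁷x₁x₂` has weight `15`. So `y₄G₂` and `G₃` only produce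
monomials of weight at most `14` and `12`, and the coefficient of `x₀⁷x₁x₂` comes entirely from
`g₄²g₃ = g₄² x₀x₁x₂`, where it is the square of the `x₀³`-coefficient of `g₄`.
-/

open MvPolynomial Finsupp

namespace MvPolynomial

section WeightedTotalDegree

variable {R σ M : Type*} [CommSemiring R] [AddCommMonoid M] [SemilatticeSup M] [OrderBot M]
  (w : σ → M)

theorem coeff_eq_zero_of_weightedTotalDegree_lt {p : MvPolynomial σ R} {u : σ →₀ ℕ}
    (h : weightedTotalDegree w p < weight w u) : coeff u p = 0 :=
  notMem_support_iff.mp fun hu => (le_weightedTotalDegree w hu).not_gt h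

theorem IsWeightedHomogeneous.weightedTotalDegree_le {p : MvPolynomial σ R} {n : M}
    (hp : IsWeightedHomogeneous w p n) : weightedTotalDegree w p ≤ n :=
  Finset.sup_le fun _ hu => (hp (mem_support_iff.mp hu)).le

theorem weightedTotalDegree_C_le (c : R) : weightedTotalDegree w (C c : MvPolynomial σ R) ≤ 0 :=
  (isWeightedHomogeneous_C w c).weightedTotalDegree_le w

theorem weightedTotalDegree_sum_le {ι : Type*} {s : Finset ι} {f : ι → MvPolynomial σ R} {b : M}
    (h : ∀ i ∈ s, weightedTotalDegree w (f i) ≤ b) :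
    weightedTotalDegree w (∑ i ∈ s, f i) ≤ b := by
  classical
  refine Finset.sup_le fun u hu => ?_
  obtain ⟨i, hi, hu⟩ := Finset.mem_biUnion.mp (support_sum hu)
  exact (le_weightedTotalDegree w hu).trans (h i hi)

variable [IsOrderedAddMonoid M]

theorem weightedTotalDegree_mul_le (p q : MvPolynomial σ R) :
    weightedTotalDegree w (p * q) ≤ weightedTotalDegree w p + weightedTotalDegree w q := by
  classical
  refine Finset.sup_le fun u hu => ?_
  obtain ⟨a, ha, b, hb, rfl⟩ := Finset.mem_add.mp (support_mul p q hu)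
  rw [map_add]
  exact add_le_add (le_weightedTotalDegree w ha) (le_weightedTotalDegree w hb)

theorem weightedTotalDegree_pow_le (p : MvPolynomial σ R) (n : ℕ) :
    weightedTotalDegree w (p ^ n) ≤ n • weightedTotalDegree w p := by
  induction n with
  | zero => simpa using weightedTotalDegree_C_le w (1 : R)
  | succ n ih =>
    rw [pow_succ, succ_nsmul]
    exact (weightedTotalDegree_mul_le w _ _).trans (add_le_add_left ih _)

theorem weightedTotalDegree_prod_le {ι : Type*} (s : Finset ι) (f : ι → MvPolynomial σ R) :
    weightedTotalDegree w (∏ i ∈ s, f i) ≤ ∑ i ∈ s, weightedTotalDegree w (f i) := by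
  classical
  induction s using Finset.induction_on with
  | empty => simpa using weightedTotalDegree_C_le w (1 : R)
  | insert i s hi ih =>
    rw [Finset.prod_insert hi, Finset.sum_insert hi]
    exact (weightedTotalDegree_mul_le w _ _).trans (add_le_add_right ih _)

theorem IsHomogeneous.weightedTotalDegree_aeval_le {τ : Type*} {Q : MvPolynomial τ R} {n : ℕ}
    (hQ : Q.IsHomogeneous n) {f : τ → MvPolynomial σ R} {b : M}
    (hf : ∀ i, weightedTotalDegree w (f i) ≤ b) :
    weightedTotalDegree w (MvPolynomial.aeval f Q) ≤ n • b := by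
  rw [Q.as_sum, map_sum]
  refine weightedTotalDegree_sum_le w fun v hv => ?_
  have hdeg : v.degree = n := by rw [degree_eq_weight_one]; exact hQ (mem_support_iff.mp hv)
  rw [aeval_monomial, ← hdeg, degree_apply, Finset.sum_smul]
  calc weightedTotalDegree w (algebraMap R _ (coeff v Q) * v.prod fun i e => f i ^ e)
      ≤ 0 + ∑ i ∈ v.support, weightedTotalDegree w (f i ^ v i) :=
        (weightedTotalDegree_mul_le w _ _).trans
          (add_le_add (weightedTotalDegree_C_le w _) (weightedTotalDegree_prod_le w _ _))
    _ ≤ ∑ i ∈ v.support, v i • b := by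
      rw [zero_add]
      exact Finset.sum_le_sum fun i _ =>
        (weightedTotalDegree_pow_le w _ _).trans (nsmul_le_nsmul_right (hf i) _)

theorem IsHomogeneous.weightedTotalDegree_le {p : MvPolynomial σ R} {n : ℕ}
    (hp : p.IsHomogeneous n) {b : M} (hw : ∀ i, w i ≤ b) : weightedTotalDegree w p ≤ n • b := by
  simpa using hp.weightedTotalDegree_aeval_le w (f := X)
    fun i => ((isWeightedHomogeneous_X R w i).weightedTotalDegree_le w).trans (hw i)

end WeightedTotalDegree

theorem IsHomogeneous.coeff_single_add_mul {R σ : Type*} [CommSemiring R] {p : MvPolynomial σ R}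
    {m : ℕ} (hp : p.IsHomogeneous m) (q : MvPolynomial σ R) (i : σ) (n : ℕ) :
    coeff (single i (m + n)) (p * q) = coeff (single i m) p * coeff (single i n) q := by
  classical
  rw [coeff_mul, antidiagonal_single, Finset.sum_map]
  refine (Finset.sum_eq_single_of_mem (m, n) (by simp) ?_).trans rfl
  rintro ⟨a, b⟩ hab hne
  have hab : a + b = m + n := by simpa using hab
  by_cases ha : a = m
  · exact absurd (Prod.ext ha (by simp only at ha hab ⊢; omega)) hne
  · rw [hp.coeff_eq_zero (by simpa using ha), zero_mul]

end MvPolynomial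

theorem stmt_4_general (k : Type*) [Field k]
    (g₄ : MvPolynomial (Fin 3) k) (hg₄ : g₄.IsHomogeneous 3)
    (hc : coeff (Finsupp.single (0 : Fin 3) 3) g₄ ≠ 0)
    (G₂ G₃ : MvPolynomial (Fin 4) k) (hG₂ : G₂.IsHomogeneous 2) (hG₃ : G₃.IsHomogeneous 3)
    (G : MvPolynomial (Fin 5) k)
    (hG : G = X 4 ^ 2 * X 3 + X 4 * rename Fin.castSucc G₂ + rename Fin.castSucc G₃)
    (g : Fin 5 → MvPolynomial (Fin 3) k)
    (hg : g = ![X 0 ^ 2 * X 1, X 1 ^ 2 * X 2, X 2 ^ 2 * X 0, X 0 * X 1 * X 2, g₄]) :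
    coeff (Finsupp.single (0 : Fin 3) 7 + Finsupp.single 1 1 + Finsupp.single 2 1)
        (aeval g G) ≠ 0 ∧ aeval g G ≠ 0 := by
  set m := Finsupp.single (0 : Fin 3) 7 + Finsupp.single 1 1 + Finsupp.single 2 1
  set y := g ∘ Fin.castSucc
  let ω : Fin 3 → ℕ := ![2, 0, 1]
  have hsplit : aeval g G = g₄ ^ 2 * (X 0 * X 1 * X 2) + g₄ * aeval y G₂ + aeval y G₃ := by
    subst hG hg
    simp only [map_add, map_mul, map_pow, aeval_X, aeval_rename]
    rfl
  have hm : weight ω m = 15 := by simp [m, ω, weight_eq_sum, Fin.sum_univ_three]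
  have hy : ∀ i, weightedTotalDegree ω (y i) ≤ 4 := by
    have hX := isWeightedHomogeneous_X k ω
    subst hg
    intro i
    fin_cases i
    · exact (((hX 0).pow 2).mul (hX 1)).weightedTotalDegree_le ω
    · exact ((((hX 1).pow 2).mul (hX 2)).weightedTotalDegree_le ω).trans (by decide)
    · exact (((hX 2).pow 2).mul (hX 0)).weightedTotalDegree_le ω
    · exact ((((hX 0).mul (hX 1)).mul (hX 2)).weightedTotalDegree_le ω).trans (by decide)
  have h₂ : coeff m (g₄ * aeval y G₂) = 0 := by
    refine coeff_eq_zero_of_weightedTotalDegree_lt ω (hm ▸ ?_)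
    calc weightedTotalDegree ω (g₄ * aeval y G₂) ≤ 3 • 2 + 2 • 4 :=
          (weightedTotalDegree_mul_le ω _ _).trans (add_le_add
            (hg₄.weightedTotalDegree_le ω (by decide)) (hG₂.weightedTotalDegree_aeval_le ω hy))
      _ < 15 := by norm_num
  have h₃ : coeff m (aeval y G₃) = 0 :=
    coeff_eq_zero_of_weightedTotalDegree_lt ω
      (hm ▸ (hG₃.weightedTotalDegree_aeval_le ω hy).trans_lt (by norm_num))
  have hmain : coeff m (g₄ ^ 2 * (X 0 * X 1 * X 2))
      = coeff (single 0 3) g₄ * coeff (single 0 3) g₄ := by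
    have hX : (X 0 * X 1 * X 2 : MvPolynomial (Fin 3) k)
        = monomial (single 0 1 + single 1 1 + single 2 1) 1 := by
      simp only [X, monomial_mul, mul_one]
    have hm_eq : m = single 0 (3 + 3) + (single 0 1 + single 1 1 + single 2 1) := by
      ext i; fin_cases i <;> simp [m]
    rw [hX, hm_eq, coeff_mul_monomial, mul_one, sq, hg₄.coeff_single_add_mul]
  have hcoeff : coeff m (aeval g G) ≠ 0 := by
    rw [hsplit, coeff_add, coeff_add, h₂, h₃, hmain, add_zero, add_zero]
    exact mul_ne_zero hc hc
  exact ⟨hcoeff, fun h => hcoeff (by rw [h, coeff_zero])⟩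

/-- Let `g = (x₀²x₁, x₁²x₂, x₂²x₀, x₀x₁x₂, g₄) : ℙ² → ℙ⁴` where `g₄` is a
homogeneous cubic whose `x₀³`-coefficient is nonzero, and let `G = y₄²y₃ + y₄G₂ + G₃` with
`G₂, G₃` homogeneous of degrees `2, 3` in `y₀,…,y₃`.  Then the coefficient of `x₀⁷x₁x₂` in
`G(g₀,…,g₄)` is nonzero; in particular `G(g₀,…,g₄) ≠ 0`. -/
theorem stmt_4 (k : Type*) [Field k] [CharZero k]
    (g₄ : MvPolynomial (Fin 3) k) (hg₄ : g₄.IsHomogeneous 3)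
    (hc : coeff (Finsupp.single (0 : Fin 3) 3) g₄ ≠ 0)
    (G₂ G₃ : MvPolynomial (Fin 4) k) (hG₂ : G₂.IsHomogeneous 2) (hG₃ : G₃.IsHomogeneous 3)
    (G : MvPolynomial (Fin 5) k)
    (hG : G = X 4 ^ 2 * X 3 + X 4 * rename Fin.castSucc G₂ + rename Fin.castSucc G₃)
    (g : Fin 5 → MvPolynomial (Fin 3) k)
    (hg : g = ![X 0 ^ 2 * X 1, X 1 ^ 2 * X 2, X 2 ^ 2 * X 0, X 0 * X 1 * X 2, g₄]) :
    coeff (Finsupp.single (0 : Fin 3) 7 + Finsupp.single 1 1 + Finsupp.single 2 1)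
        (aeval g G) ≠ 0 ∧ aeval g G ≠ 0 :=
  stmt_4_general k g₄ hg₄ hc G₂ G₃ hG₂ hG₃ G hG g hg
end

section
/- Let F₀ = x₀³ + a₀x₄x₀² + x₄²h₀, F₁ = x₁³ + a₁x₄x₁² + x₄²h₁, F₂ = x₂³ + a₂x₄x₂² + x₄²h₂, F₃ = x₀x₁x₂ + (1/3)x₄(a₀x₁x₂ + a₁x₀x₂ + a₂x₀x₁) + x₄²h₃, with hᵢ homogeneous linear in x₀,…,x₄ and aᵢ scalars, over a field of characteristic zero. Then in the polynomial F₀F₁F₂ − F₃³, the coefficient of every monomial divisible by x₀⁶ is zero. -/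
open MvPolynomial

/-!
Only the degree in `x₀` matters. Since `x₄` is a different variable and the `hᵢ` are linear,
`F₀` has degree at most `3` in `x₀` and `F₁`, `F₂`, `F₃` have degree at most `1`. Hence
`F₀F₁F₂` has degree at most `5` and `F₃³` at most `3` in `x₀`, so no monomial of
`F₀F₁F₂ − F₃³` is divisible by `x₀⁶`.
-/

namespace MvPolynomial

variable {σ R : Type*} [CommSemiring R] {i m : σ}

theorem degreeOf_C_mul_X_mul_le (hm : i ≠ m) (c : R) (p : MvPolynomial σ R) :
    degreeOf i (C c * X m * p) ≤ degreeOf i p :=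
  calc degreeOf i (C c * X m * p) ≤ degreeOf i (C c * X m) + degreeOf i p := degreeOf_mul_le ..
    _ ≤ degreeOf i (X m : MvPolynomial σ R) + degreeOf i p := by grw [degreeOf_C_mul_le]
    _ = degreeOf i p := by rw [degreeOf_X_of_ne hm, zero_add]

theorem degreeOf_add_X_sq_mul_le (hm : i ≠ m) (p : MvPolynomial σ R) {g : MvPolynomial σ R}
    (hg : g.IsHomogeneous 1) : degreeOf i (p + X m ^ 2 * g) ≤ max (degreeOf i p) 1 := by
  have hXg : degreeOf i (X m ^ 2 * g) ≤ 1 :=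
    calc degreeOf i (X m ^ 2 * g) ≤ degreeOf i (X m ^ 2 : MvPolynomial σ R) + degreeOf i g :=
          degreeOf_mul_le ..
      _ = degreeOf i g := by rw [degreeOf_X_pow_of_ne 2 hm, zero_add]
      _ ≤ 1 := (degreeOf_le_totalDegree g i).trans hg.totalDegree_le
  exact (degreeOf_add_le i p _).trans (max_le_max le_rfl hXg)

theorem degreeOf_pow_three_add_le (hm : i ≠ m) (x : MvPolynomial σ R) (a : R) :
    degreeOf i (x ^ 3 + C a * X m * x ^ 2) ≤ 3 * degreeOf i x := by
  refine (degreeOf_add_le i _ _).trans (max_le (degreeOf_pow_le i x 3) ?_)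
  calc degreeOf i (C a * X m * x ^ 2) ≤ degreeOf i (x ^ 2) := degreeOf_C_mul_X_mul_le hm a _
    _ ≤ 2 * degreeOf i x := degreeOf_pow_le i x 2
    _ ≤ 3 * degreeOf i x := by omega

theorem degreeOf_mul_mul_add_le (hm : i ≠ m) (x y z : MvPolynomial σ R) (c a b e : R) :
    degreeOf i (x * y * z + C c * X m * (C a * y * z + C b * x * z + C e * x * y)) ≤
      degreeOf i x + degreeOf i y + degreeOf i z := by
  have hCmul : ∀ (r : R) (p q : MvPolynomial σ R),
      degreeOf i (C r * p * q) ≤ degreeOf i p + degreeOf i q := fun r p q => by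
    grw [mul_assoc, degreeOf_C_mul_le, degreeOf_mul_le]
  refine (degreeOf_add_le i _ _).trans (max_le ?_ ?_)
  · grw [degreeOf_mul_le, degreeOf_mul_le]
  · grw [degreeOf_C_mul_X_mul_le hm, degreeOf_add_le, degreeOf_add_le, hCmul, hCmul, hCmul]
    omega

end MvPolynomial

theorem stmt_8_general (k : Type*) [Field k]
    (a₀ a₁ a₂ : k) (h : Fin 4 → MvPolynomial (Fin 5) k)
    (hh : ∀ i, (h i).IsHomogeneous 1)
    (F₀ F₁ F₂ F₃ : MvPolynomial (Fin 5) k)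
    (hF₀ : F₀ = X 0 ^ 3 + C a₀ * X 4 * X 0 ^ 2 + X 4 ^ 2 * h 0)
    (hF₁ : F₁ = X 1 ^ 3 + C a₁ * X 4 * X 1 ^ 2 + X 4 ^ 2 * h 1)
    (hF₂ : F₂ = X 2 ^ 3 + C a₂ * X 4 * X 2 ^ 2 + X 4 ^ 2 * h 2)
    (hF₃ : F₃ = X 0 * X 1 * X 2 +
      C (3⁻¹ : k) * X 4 * (C a₀ * X 1 * X 2 + C a₁ * X 0 * X 2 + C a₂ * X 0 * X 1) +
      X 4 ^ 2 * h 3) :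
    ∀ d : Fin 5 →₀ ℕ, 6 ≤ d 0 → coeff d (F₀ * F₁ * F₂ - F₃ ^ 3) = 0 := by
  intro d hd
  have h04 : (0 : Fin 5) ≠ 4 := by decide
  have hX0 : degreeOf 0 (X 0 : MvPolynomial (Fin 5) k) = 1 := degreeOf_X_self 0
  have hX1 : degreeOf 0 (X 1 : MvPolynomial (Fin 5) k) = 0 := degreeOf_X_of_ne (by decide)
  have hX2 : degreeOf 0 (X 2 : MvPolynomial (Fin 5) k) = 0 := degreeOf_X_of_ne (by decide)
  have hdeg₀ : degreeOf 0 F₀ ≤ 3 := by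
    grw [hF₀, degreeOf_add_X_sq_mul_le h04 _ (hh 0), degreeOf_pow_three_add_le h04, hX0]; simp
  have hdeg₁ : degreeOf 0 F₁ ≤ 1 := by
    grw [hF₁, degreeOf_add_X_sq_mul_le h04 _ (hh 1), degreeOf_pow_three_add_le h04, hX1]; simp
  have hdeg₂ : degreeOf 0 F₂ ≤ 1 := by
    grw [hF₂, degreeOf_add_X_sq_mul_le h04 _ (hh 2), degreeOf_pow_three_add_le h04, hX2]; simp
  have hdeg₃ : degreeOf 0 F₃ ≤ 1 := by
    grw [hF₃, degreeOf_add_X_sq_mul_le h04 _ (hh 3), degreeOf_mul_mul_add_le h04, hX0, hX1, hX2]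
    simp
  have hdeg : degreeOf 0 (F₀ * F₁ * F₂ - F₃ ^ 3) < d 0 := by
    grw [degreeOf_sub_le, degreeOf_mul_le, degreeOf_mul_le, degreeOf_pow_le]
    omega
  exact notMem_support_iff.mp (notMem_support_of_degreeOf_lt 0 hdeg)

/-- With `F₀ = x₀³ + a₀x₄x₀² + x₄²h₀`, `F₁ = x₁³ + a₁x₄x₁² + x₄²h₁`,
`F₂ = x₂³ + a₂x₄x₂² + x₄²h₂`,
`F₃ = x₀x₁x₂ + (1/3)x₄(a₀x₁x₂ + a₁x₀x₂ + a₂x₀x₁) + x₄²h₃`, the `hᵢ` homogeneous linear and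
`aᵢ` scalars, over a field of characteristic zero, every monomial divisible by `x₀⁶` has
zero coefficient in `F₀F₁F₂ − F₃³`. -/
theorem stmt_8 (k : Type*) [Field k] [CharZero k]
    (a₀ a₁ a₂ : k) (h : Fin 4 → MvPolynomial (Fin 5) k)
    (hh : ∀ i, (h i).IsHomogeneous 1)
    (F₀ F₁ F₂ F₃ : MvPolynomial (Fin 5) k)
    (hF₀ : F₀ = X 0 ^ 3 + C a₀ * X 4 * X 0 ^ 2 + X 4 ^ 2 * h 0)
    (hF₁ : F₁ = X 1 ^ 3 + C a₁ * X 4 * X 1 ^ 2 + X 4 ^ 2 * h 1)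
    (hF₂ : F₂ = X 2 ^ 3 + C a₂ * X 4 * X 2 ^ 2 + X 4 ^ 2 * h 2)
    (hF₃ : F₃ = X 0 * X 1 * X 2 +
      C (3⁻¹ : k) * X 4 * (C a₀ * X 1 * X 2 + C a₁ * X 0 * X 2 + C a₂ * X 0 * X 1) +
      X 4 ^ 2 * h 3) :
    ∀ d : Fin 5 →₀ ℕ, 6 ≤ d 0 → coeff d (F₀ * F₁ * F₂ - F₃ ^ 3) = 0 :=
  stmt_8_general k a₀ a₁ a₂ h hh F₀ F₁ F₂ F₃ hF₀ hF₁ hF₂ hF₃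
end

section
/- Let q₀,…,q₄ be homogeneous degree-2 polynomials in x₀,…,x₄ over a field of characteristic zero, and suppose that x₄ divides the polynomial q₀x₁³x₂³ + q₁x₀³x₂³ + q₂x₀³x₁³ − 3q₃x₀²x₁²x₂² + q₄·P, where P is a homogeneous degree-6 polynomial in x₀,…,x₄ in which x₀⁶ has nonzero coefficient. Then x₄ divides q₄, and there exist scalars a₀, a₁, a₂ such that modulo x₄: q₀ ≡ a₀x₀², q₁ ≡ a₁x₁², q₂ ≡ a₂x₂², and q₃ ≡ (1/3)(a₀x₁x₂ + a₁x₀x₂ + a₂x₀x₁). -/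
/-!
Reduce modulo `x₄` (write `q̄` for the reduction), so that the hypothesis becomes
`F + q̄₄ P̄ = 0`, `F` being the given combination of `q̄₀, …, q̄₃`. Every term of `F` has
`x₀`-degree at most 5, while `P̄` has `x₀`-degree at least 6, so in the domain
`k[x₀, …, x₄]` the product `q̄₄ P̄` can only cancel `F` if `q̄₄ = 0`. Then `F = 0`; all its
terms except `q̄₀ x₁³ x₂³` are divisible by `x₀²`, so the prime `x₀` gives `x₀² ∣ q̄₀`, and a
quadric divisible by `x₀²` is a multiple of it. Symmetrically for `q̄₁` and `q̄₂`, after which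
cancelling `x₀² x₁² x₂²` in `F = 0` determines `q̄₃`.
-/

open MvPolynomial

namespace MvPolynomial

section SubstZero

variable {σ R : Type*} [CommRing R] [DecidableEq σ] (i : σ)

noncomputable def substZero : MvPolynomial σ R →ₐ[R] MvPolynomial σ R :=
  aeval fun j => if j = i then 0 else X j

@[simp]
lemma substZero_X_self : substZero i (X i : MvPolynomial σ R) = 0 := by
  simp [substZero]

variable {i}

@[simp]
lemma substZero_X_of_ne {j : σ} (h : j ≠ i) : substZero i (X j : MvPolynomial σ R) = X j := by
  simp [substZero, h]

lemma X_dvd_sub_substZero (p : MvPolynomial σ R) : X i ∣ p - substZero i p := by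
  induction p using MvPolynomial.induction_on with
  | C a => simp
  | add p q hp hq => simpa [add_sub_add_comm] using dvd_add hp hq
  | mul_X p j hp =>
    have hX : X i ∣ X j - substZero i (X j : MvPolynomial σ R) := by
      by_cases hj : j = i <;> simp [hj]
    have := dvd_add (dvd_mul_of_dvd_left hp (X j)) (dvd_mul_of_dvd_right hX (substZero i p))
    rw [map_mul]
    convert this using 1
    ring

lemma substZero_eq_zero_iff_X_dvd {p : MvPolynomial σ R} : substZero i p = 0 ↔ X i ∣ p := by
  constructor
  · intro h
    simpa [h] using X_dvd_sub_substZero (i := i) p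
  · rintro ⟨r, rfl⟩
    simp

lemma coeff_substZero_of_eq_zero (p : MvPolynomial σ R) {d : σ →₀ ℕ} (hd : d i = 0) :
    coeff d (substZero i p) = coeff d p := by
  obtain ⟨r, hr⟩ := X_dvd_sub_substZero (i := i) p
  have : coeff d (X i * r) = 0 := by
    rw [coeff_X_mul', if_neg (by simpa using hd)]
  rw [← hr, coeff_sub] at this
  exact (sub_eq_zero.mp this).symm

lemma IsHomogeneous.substZero {p : MvPolynomial σ R} {n : ℕ} (hp : p.IsHomogeneous n) :
    (substZero i p).IsHomogeneous n := by
  have h := hp.aeval (n := 1) (fun j => if j = i then 0 else X j) fun j => by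
    split_ifs
    · exact isHomogeneous_zero σ R 1
    · exact isHomogeneous_X _ _
  rw [one_mul] at h
  exact h

end SubstZero

section Domain

variable {σ R : Type*} [CommRing R] [IsDomain R]

lemma X_pow_dvd_of_dvd_mul_X_pow_mul_X_pow {i j l : σ} (hij : i ≠ j) (hil : i ≠ l)
    {p : MvPolynomial σ R} {n a b : ℕ} (h : X i ^ n ∣ p * (X j ^ a * X l ^ b)) :
    X i ^ n ∣ p := by
  refine X_prime.pow_dvd_of_dvd_mul_right n ?_ h
  rw [X_prime.dvd_mul]
  rintro (hj | hl)
  · exact hij (X_dvd_X.mp (X_prime.dvd_of_dvd_pow hj))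
  · exact hil (X_dvd_X.mp (X_prime.dvd_of_dvd_pow hl))

lemma exists_eq_C_mul_X_pow_of_X_pow_dvd {i : σ} {p : MvPolynomial σ R} {n : ℕ}
    (hp : p.totalDegree ≤ n) (h : X i ^ n ∣ p) : ∃ a, p = C a * X i ^ n := by
  obtain ⟨r, rfl⟩ := h
  rcases eq_or_ne r 0 with rfl | hr
  · exact ⟨0, by simp⟩
  rw [totalDegree_mul_of_isDomain (pow_ne_zero _ (X_ne_zero i)) hr, totalDegree_X_pow] at hp
  refine ⟨r.coeff 0, ?_⟩
  rw [mul_comm, ← totalDegree_eq_zero_iff_eq_C.mp (by omega)]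

end Domain

end MvPolynomial

section QuadricCombination

variable {σ R : Type*} [CommRing R]

noncomputable def quadricCombination (x y z : σ) (q₀ q₁ q₂ q₃ : MvPolynomial σ R) :
    MvPolynomial σ R :=
  q₀ * X y ^ 3 * X z ^ 3 + q₁ * X x ^ 3 * X z ^ 3 + q₂ * X x ^ 3 * X y ^ 3
    - 3 * q₃ * X x ^ 2 * X y ^ 2 * X z ^ 2

variable {x y z : σ} {q₀ q₁ q₂ q₃ : MvPolynomial σ R}

lemma degreeOf_quadricCombination_le (hxy : x ≠ y) (hxz : x ≠ z)
    (h₀ : q₀.degreeOf x ≤ 2) (h₁ : q₁.degreeOf x ≤ 2) (h₂ : q₂.degreeOf x ≤ 2)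
    (h₃ : q₃.degreeOf x ≤ 2) :
    (quadricCombination x y z q₀ q₁ q₂ q₃).degreeOf x ≤ 5 := by
  cases subsingleton_or_nontrivial R
  · simp [Subsingleton.elim (quadricCombination x y z q₀ q₁ q₂ q₃) 0]
  have h3 : (3 : MvPolynomial σ R).degreeOf x = 0 := by
    rw [← map_ofNat C 3, degreeOf_C]
  have hpow (p : MvPolynomial σ R) (n : ℕ) : (p * X x ^ n).degreeOf x ≤ p.degreeOf x + n :=
    (degreeOf_mul_le _ _ _).trans (by rw [degreeOf_X_self_pow])
  unfold quadricCombination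
  refine (degreeOf_sub_le _ _ _).trans (max_le ((degreeOf_add_le _ _ _).trans
    (max_le ((degreeOf_add_le _ _ _).trans (max_le ?_ ?_)) ?_)) ?_)
  · rw [degreeOf_mul_X_pow_of_ne _ hxz, degreeOf_mul_X_pow_of_ne _ hxy]
    omega
  · rw [degreeOf_mul_X_pow_of_ne _ hxz]
    grw [hpow]
    omega
  · rw [degreeOf_mul_X_pow_of_ne _ hxy]
    grw [hpow]
    omega
  · rw [degreeOf_mul_X_pow_of_ne _ hxz, degreeOf_mul_X_pow_of_ne _ hxy]
    grw [hpow, degreeOf_mul_le, h3]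
    omega

lemma substZero_quadricCombination [DecidableEq σ] {i : σ} (hx : x ≠ i) (hy : y ≠ i)
    (hz : z ≠ i) :
    substZero i (quadricCombination x y z q₀ q₁ q₂ q₃) =
      quadricCombination x y z (substZero i q₀) (substZero i q₁) (substZero i q₂)
        (substZero i q₃) := by
  simp only [quadricCombination, map_add, map_sub, map_mul, map_pow, map_ofNat,
    substZero_X_of_ne hx, substZero_X_of_ne hy, substZero_X_of_ne hz]

lemma eq_zero_of_quadricCombination_add_mul_eq_zero [IsDomain R] (hxy : x ≠ y) (hxz : x ≠ z)
    (h₀ : q₀.degreeOf x ≤ 2) (h₁ : q₁.degreeOf x ≤ 2) (h₂ : q₂.degreeOf x ≤ 2)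
    (h₃ : q₃.degreeOf x ≤ 2) {q₄ P : MvPolynomial σ R} (hP : coeff (Finsupp.single x 6) P ≠ 0)
    (h : quadricCombination x y z q₀ q₁ q₂ q₃ + q₄ * P = 0) : q₄ = 0 := by
  by_contra hq₄
  have hP₀ : P ≠ 0 := by
    rintro rfl
    exact hP (coeff_zero _)
  have hP₆ : 6 ≤ P.degreeOf x := by
    simpa using monomial_le_degreeOf x (mem_support_iff.mpr hP)
  have hle := degreeOf_quadricCombination_le (z := z) hxy hxz h₀ h₁ h₂ h₃
  rw [eq_neg_of_add_eq_zero_left h, degreeOf_neg, degreeOf_mul_eq hq₄ hP₀] at hle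
  omega

lemma exists_eq_of_quadricCombination_eq_zero {k : Type*} [Field k] (h3 : (3 : k) ≠ 0)
    {x y z : σ} (hxy : x ≠ y) (hxz : x ≠ z) (hyz : y ≠ z) {q₀ q₁ q₂ q₃ : MvPolynomial σ k}
    (h₀ : q₀.totalDegree ≤ 2) (h₁ : q₁.totalDegree ≤ 2) (h₂ : q₂.totalDegree ≤ 2)
    (h : quadricCombination x y z q₀ q₁ q₂ q₃ = 0) :
    ∃ a₀ a₁ a₂ : k, q₀ = C a₀ * X x ^ 2 ∧ q₁ = C a₁ * X y ^ 2 ∧ q₂ = C a₂ * X z ^ 2 ∧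
      q₃ = C 3⁻¹ * (C a₀ * X y * X z + C a₁ * X x * X z + C a₂ * X x * X y) := by
  unfold quadricCombination at h
  obtain ⟨a₀, rfl⟩ := exists_eq_C_mul_X_pow_of_X_pow_dvd h₀ <|
    X_pow_dvd_of_dvd_mul_X_pow_mul_X_pow (a := 3) (b := 3) hxy hxz
      ⟨-(q₁ * X x * X z ^ 3 + q₂ * X x * X y ^ 3 - 3 * q₃ * X y ^ 2 * X z ^ 2),
        by linear_combination h⟩
  obtain ⟨a₁, rfl⟩ := exists_eq_C_mul_X_pow_of_X_pow_dvd h₁ <|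
    X_pow_dvd_of_dvd_mul_X_pow_mul_X_pow (a := 3) (b := 3) hxy.symm hyz
      ⟨-(C a₀ * X x ^ 2 * X y * X z ^ 3 + q₂ * X x ^ 3 * X y - 3 * q₃ * X x ^ 2 * X z ^ 2),
        by linear_combination h⟩
  obtain ⟨a₂, rfl⟩ := exists_eq_C_mul_X_pow_of_X_pow_dvd h₂ <|
    X_pow_dvd_of_dvd_mul_X_pow_mul_X_pow (a := 3) (b := 3) hxz.symm hyz.symm
      ⟨-(C a₀ * X x ^ 2 * X y ^ 3 * X z + C a₁ * X x ^ 3 * X y ^ 2 * X z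
          - 3 * q₃ * X x ^ 2 * X y ^ 2),
        by linear_combination h⟩
  refine ⟨a₀, a₁, a₂, rfl, rfl, rfl, ?_⟩
  have hX : (X x ^ 2 * X y ^ 2 * X z ^ 2 : MvPolynomial σ k) ≠ 0 := by
    simp [X_ne_zero]
  have h3q₃ : 3 * q₃ = C a₀ * X y * X z + C a₁ * X x * X z + C a₂ * X x * X y :=
    mul_right_cancel₀ hX (by linear_combination -h)
  have hC : (C 3⁻¹ * 3 : MvPolynomial σ k) = 1 := by
    rw [← map_ofNat C 3, ← map_mul, inv_mul_cancel₀ h3, map_one]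
  linear_combination C 3⁻¹ * h3q₃ - q₃ * hC

end QuadricCombination

theorem stmt_9_general (k : Type*) [Field k] [CharZero k]
    (q : Fin 5 → MvPolynomial (Fin 5) k) (hq : ∀ i, (q i).IsHomogeneous 2)
    (P : MvPolynomial (Fin 5) k)
    (hP6 : coeff (Finsupp.single (0 : Fin 5) 6) P ≠ 0)
    (hdvd : (X 4 : MvPolynomial (Fin 5) k) ∣
      (q 0 * X 1 ^ 3 * X 2 ^ 3 + q 1 * X 0 ^ 3 * X 2 ^ 3 + q 2 * X 0 ^ 3 * X 1 ^ 3
        - 3 * q 3 * X 0 ^ 2 * X 1 ^ 2 * X 2 ^ 2 + q 4 * P)) :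
    (X 4 : MvPolynomial (Fin 5) k) ∣ q 4 ∧
    ∃ a₀ a₁ a₂ : k,
      letI ev0 : MvPolynomial (Fin 5) k →ₐ[k] MvPolynomial (Fin 5) k :=
        aeval (fun i => if i = 4 then 0 else X i)
      ev0 (q 0) = C a₀ * X 0 ^ 2 ∧
      ev0 (q 1) = C a₁ * X 1 ^ 2 ∧
      ev0 (q 2) = C a₂ * X 2 ^ 2 ∧
      ev0 (q 3) = C (3⁻¹ : k) * (C a₀ * X 1 * X 2 + C a₁ * X 0 * X 2 + C a₂ * X 0 * X 1) := by
  have hdeg (i : Fin 5) : (substZero 4 (q i)).totalDegree ≤ 2 := (hq i).substZero.totalDegree_le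
  have hdeg₀ (i : Fin 5) : (substZero 4 (q i)).degreeOf 0 ≤ 2 :=
    (degreeOf_le_totalDegree _ 0).trans (hdeg i)
  have hsum : substZero 4 (quadricCombination 0 1 2 (q 0) (q 1) (q 2) (q 3) + q 4 * P) = 0 :=
    substZero_eq_zero_iff_X_dvd.mpr hdvd
  rw [map_add, map_mul, substZero_quadricCombination (by decide) (by decide) (by decide)] at hsum
  have hq₄ : substZero 4 (q 4) = 0 :=
    eq_zero_of_quadricCombination_add_mul_eq_zero (by decide) (by decide) (hdeg₀ 0) (hdeg₀ 1)
      (hdeg₀ 2) (hdeg₀ 3) (by rwa [coeff_substZero_of_eq_zero _ (by simp)]) hsum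
  refine ⟨substZero_eq_zero_iff_X_dvd.mp hq₄, ?_⟩
  rw [hq₄, zero_mul, add_zero] at hsum
  exact exists_eq_of_quadricCombination_eq_zero three_ne_zero (by decide) (by decide) (by decide)
    (hdeg 0) (hdeg 1) (hdeg 2) hsum

/-- Let `q₀,…,q₄` be homogeneous quadrics in `x₀,…,x₄` over a field of
characteristic zero, and suppose `x₄` divides
`q₀x₁³x₂³ + q₁x₀³x₂³ + q₂x₀³x₁³ − 3q₃x₀²x₁²x₂² + q₄·P`, where `P` is a homogeneous sextic
in which `x₀⁶` has nonzero coefficient.  Then `x₄ ∣ q₄`, and there exist scalars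
`a₀, a₁, a₂` such that modulo `x₄` (i.e. after substituting `x₄ = 0`):
`q₀ ≡ a₀x₀²`, `q₁ ≡ a₁x₁²`, `q₂ ≡ a₂x₂²`, `q₃ ≡ (1/3)(a₀x₁x₂ + a₁x₀x₂ + a₂x₀x₁)`. -/
theorem stmt_9 (k : Type*) [Field k] [CharZero k]
    (q : Fin 5 → MvPolynomial (Fin 5) k) (hq : ∀ i, (q i).IsHomogeneous 2)
    (P : MvPolynomial (Fin 5) k) (hP : P.IsHomogeneous 6)
    (hP6 : coeff (Finsupp.single (0 : Fin 5) 6) P ≠ 0)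
    (hdvd : (X 4 : MvPolynomial (Fin 5) k) ∣
      (q 0 * X 1 ^ 3 * X 2 ^ 3 + q 1 * X 0 ^ 3 * X 2 ^ 3 + q 2 * X 0 ^ 3 * X 1 ^ 3
        - 3 * q 3 * X 0 ^ 2 * X 1 ^ 2 * X 2 ^ 2 + q 4 * P)) :
    (X 4 : MvPolynomial (Fin 5) k) ∣ q 4 ∧
    ∃ a₀ a₁ a₂ : k,
      letI ev0 : MvPolynomial (Fin 5) k →ₐ[k] MvPolynomial (Fin 5) k :=
        aeval (fun i => if i = 4 then 0 else X i)
      ev0 (q 0) = C a₀ * X 0 ^ 2 ∧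
      ev0 (q 1) = C a₁ * X 1 ^ 2 ∧
      ev0 (q 2) = C a₂ * X 2 ^ 2 ∧
      ev0 (q 3) = C (3⁻¹ : k) * (C a₀ * X 1 * X 2 + C a₁ * X 0 * X 2 + C a₂ * X 0 * X 1) :=
  stmt_9_general k q hq P hP6 hdvd
end

section
/- Let φ : ℙ² ⇢ ℙ² be a birational map defined on an open set U whose complement is finite, and let g : ℙ² → S be a dominant morphism to a surface such that g ∘ φ = g|_U. If g*O_S(1) ≅ O_{ℙ²}(3) for an ample line bundle O_S(1) on S, then φ extends to a linear automorphism of ℙ². -/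
/-!
Write `g ∘ φ = c • g`. Comparing degrees, `c` is homogeneous of degree `3 (e - 1)`. Since `g` is
base-point free, every zero of `c` is a common zero of the `φᵢ`, so by the Nullstellensatz every
prime factor of `c` divides all `φᵢ`; coprimality makes `c` a unit, whence `e = 1`. Conversely a
nonzero common zero of the `φᵢ` would be a zero of the unit `c`, so the linear map `φ` is injective.
-/

open MvPolynomial

namespace MvPolynomial

variable {σ ι k R : Type*}

section GradedAlgebra

attribute [local instance] gradedAlgebra

theorem homogeneousComponent_add_mul_of_isHomogeneous [CommSemiring R] {p q : MvPolynomial σ R}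
    {m : ℕ} (hq : q.IsHomogeneous m) (d : ℕ) :
    homogeneousComponent (d + m) (p * q) = homogeneousComponent d p * q := by
  rw [← decomposition.decompose'_apply, ← decomposition.decompose'_apply]
  exact DirectSum.coe_decompose_mul_add_of_right_mem (homogeneousSubmodule σ R) hq

end GradedAlgebra

theorem IsHomogeneous.of_mul_right [CommRing R] [IsDomain R] {p q : MvPolynomial σ R}
    {m n : ℕ} (hpq : (p * q).IsHomogeneous n) (hq : q.IsHomogeneous m) (hq0 : q ≠ 0)
    (hp0 : p ≠ 0) : m ≤ n ∧ p.IsHomogeneous (n - m) := by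
  have hdeg : ∀ μ ∈ p.support, μ.degree + m = n := by
    intro μ hμ
    have hcomp : homogeneousComponent μ.degree p ≠ 0 := fun h => by
      have := congrArg (coeff μ) h
      rw [coeff_homogeneousComponent, if_pos rfl, coeff_zero] at this
      exact mem_support_iff.mp hμ this
    by_contra hne
    have hprod := homogeneousComponent_add_mul_of_isHomogeneous (p := p) hq μ.degree
    rw [homogeneousComponent_of_mem hpq, if_neg hne] at hprod
    exact mul_ne_zero hcomp hq0 hprod.symm
  obtain ⟨μ, hμ⟩ := support_nonempty.mpr hp0
  refine ⟨by grind, fun ν hν => ?_⟩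
  have hν' := hdeg ν (mem_support_iff.mpr hν)
  show Finsupp.weight (fun _ => 1) ν = n - m
  rw [← Finsupp.degree_eq_weight_one]
  omega

theorem IsHomogeneous.eval_zero [CommSemiring R] {p : MvPolynomial σ R} {n : ℕ}
    (hp : p.IsHomogeneous n) (hn : n ≠ 0) : eval 0 p = 0 := by
  rw [MvPolynomial.eval_zero, constantCoeff_eq]
  exact hp.coeff_eq_zero (by simpa using hn.symm)

theorem IsHomogeneous.not_isUnit [CommSemiring R] [Nontrivial R] {p : MvPolynomial σ R} {n : ℕ}
    (hp : p.IsHomogeneous n) (hn : n ≠ 0) : ¬IsUnit p := fun hu =>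
  not_isUnit_zero (hp.eval_zero hn ▸ hu.map (eval 0))

theorem IsHomogeneous.exists_eq_sum_C_mul_X [CommSemiring R] [Fintype σ]
    {p : MvPolynomial σ R} (hp : p.IsHomogeneous 1) : ∃ a : σ → R, p = ∑ i, C (a i) * X i := by
  have hspan : p ∈ Submodule.span R (Set.range X) := by
    rwa [← homogeneousSubmodule_one_eq_span_X, mem_homogeneousSubmodule]
  obtain ⟨a, ha⟩ := (Submodule.mem_span_range_iff_exists_fun R).mp hspan
  exact ⟨a, by simp only [← ha, smul_eq_C_mul]⟩

theorem eval_aeval [CommSemiring R] (x : σ → R) (φ : ι → MvPolynomial σ R)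
    (p : MvPolynomial ι R) : eval x (aeval φ p) = eval (fun i => eval x (φ i)) p := by
  rw [aeval_def, algebraMap_eq, ← eval_assoc]
  rfl

theorem dvd_of_forall_eval_eq_zero_of_prime [Field k] [IsAlgClosed k] [Finite σ]
    {p f : MvPolynomial σ k} (hp : Prime p) (hf : ∀ x, eval x p = 0 → eval x f = 0) :
    p ∣ f := by
  have : (Ideal.span {p}).IsPrime := (Ideal.span_singleton_prime hp.ne_zero).mpr hp
  rw [← Ideal.mem_span_singleton, ← IsPrime.vanishingIdeal_zeroLocus (K := k) (Ideal.span {p}),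
    mem_vanishingIdeal_iff]
  exact fun x hx => hf x (mem_zeroLocus_iff.mp hx p (Ideal.subset_span rfl))

theorem isUnit_of_zeros_subset_commonZeros [Field k] [IsAlgClosed k] [Finite σ]
    {c : MvPolynomial σ k} (hc0 : c ≠ 0) {φ : ι → MvPolynomial σ k}
    (hcop : ∀ q, (∀ i, q ∣ φ i) → IsUnit q) (h : ∀ x, eval x c = 0 → ∀ i, eval x (φ i) = 0) :
    IsUnit c := by
  by_contra hcu
  obtain ⟨p, hp, ⟨r, rfl⟩⟩ := WfDvdMonoid.exists_irreducible_factor hcu hc0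
  refine hp.not_isUnit (hcop p fun i => dvd_of_forall_eval_eq_zero_of_prime hp.prime ?_)
  intro x hx
  exact h x (by rw [eval_mul, hx, zero_mul]) i

section Equivariant

variable [CommSemiring R] {g : ι → MvPolynomial σ R} {φ : σ → MvPolynomial σ R}
  {c : MvPolynomial σ R}

theorem forall_eval_eq_zero_of_aeval_eq_mul (hbpf : ∀ y : σ → R, y ≠ 0 → ∃ j, eval y (g j) ≠ 0)
    (hcg : ∀ j, aeval φ (g j) = c * g j) {x : σ → R} (hx : eval x c = 0) :
    ∀ i, eval x (φ i) = 0 := by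
  by_contra h
  obtain ⟨j, hj⟩ := hbpf _ fun h0 => h (congrFun h0)
  apply hj
  rw [← eval_aeval, hcg, eval_mul, hx, zero_mul]

theorem eval_eq_zero_of_aeval_eq_mul [NoZeroDivisors R] {d : ℕ}
    (hbpf : ∀ y : σ → R, y ≠ 0 → ∃ j, eval y (g j) ≠ 0) (hg : ∀ j, (g j).IsHomogeneous d)
    (hd : d ≠ 0) (hcg : ∀ j, aeval φ (g j) = c * g j) {x : σ → R} (hx0 : x ≠ 0)
    (hx : ∀ i, eval x (φ i) = 0) : eval x c = 0 := by
  obtain ⟨j, hj⟩ := hbpf x hx0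
  have hφx : (fun i => eval x (φ i)) = 0 := _root_.funext hx
  have hgφx := congrArg (eval x) (hcg j)
  rw [eval_aeval, hφx, (hg j).eval_zero hd, eval_mul, eq_comm] at hgφx
  exact (mul_eq_zero.mp hgφx).resolve_right hj

end Equivariant

end MvPolynomial

theorem stmt_10_general (k : Type*) [Field k] [IsAlgClosed k]
    (e : ℕ)
    (φ : Fin 3 → MvPolynomial (Fin 3) k)
    (hφ : ∀ i, (φ i).IsHomogeneous e)
    (hcop : ∀ q : MvPolynomial (Fin 3) k, (∀ i, q ∣ φ i) → IsUnit q)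
    (g : Fin 5 → MvPolynomial (Fin 3) k) (hg : ∀ j, (g j).IsHomogeneous 3)
    (hbpf : ∀ x : Fin 3 → k, x ≠ 0 → ∃ j, eval x (g j) ≠ 0)
    (hinv : ∃ c : MvPolynomial (Fin 3) k, c ≠ 0 ∧ ∀ j, aeval φ (g j) = c * g j) :
    e = 1 ∧ ∃ M : Matrix (Fin 3) (Fin 3) k, IsUnit M.det ∧
      ∀ i, φ i = ∑ j : Fin 3, C (M i j) * X j := by
  obtain ⟨c, hc0, hcg⟩ := hinv
  obtain ⟨j₀, hj₀⟩ := hbpf (Pi.single 0 1) (by simp)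
  have hgj₀ : g j₀ ≠ 0 := fun h => hj₀ (by rw [h, map_zero])
  obtain ⟨he, hc⟩ := (hcg j₀ ▸ (hg j₀).aeval φ hφ).of_mul_right (hg j₀) hgj₀ hc0
  have hcu : IsUnit c := isUnit_of_zeros_subset_commonZeros hc0 hcop fun x hx =>
    forall_eval_eq_zero_of_aeval_eq_mul hbpf hcg hx
  obtain rfl : e = 1 := by
    by_contra he1
    exact hc.not_isUnit (by omega) hcu
  choose M hM using fun i => (hφ i).exists_eq_sum_C_mul_X
  refine ⟨rfl, Matrix.of M, ?_, hM⟩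
  rw [isUnit_iff_ne_zero, Ne, ← Matrix.exists_mulVec_eq_zero_iff.not]
  rintro ⟨v, hv0, hv⟩
  refine (hcu.map (eval v)).ne_zero (eval_eq_zero_of_aeval_eq_mul hbpf hg three_ne_zero hcg hv0 ?_)
  intro i
  simpa [hM, Matrix.mulVec, dotProduct] using congrFun hv i

/-- Let `φ : ℙ² ⇢ ℙ²` be a birational map, defined away from the finite
common zero locus of its coprime homogeneous components `φ₀, φ₁, φ₂` of degree `e ≥ 1`
(birationality: there is a rational inverse `ψ` with `ψ ∘ φ = h · id` for some `h ≠ 0`),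
and let `g : ℙ² → S ⊂ ℙ⁴` be a dominant morphism onto a surface given by base-point-free
homogeneous cubics `g₀,…,g₄` (dominance onto a surface: three of the `gⱼ` are algebraically
independent).  If `g ∘ φ = g` as rational maps, then `φ` extends to a linear automorphism
of `ℙ²`: the `φᵢ` are given by an invertible `3×3` matrix. -/
theorem stmt_10 (k : Type*) [Field k] [IsAlgClosed k] [CharZero k]
    (e e' : ℕ) (he : 1 ≤ e)
    (φ ψ : Fin 3 → MvPolynomial (Fin 3) k)
    (hφ : ∀ i, (φ i).IsHomogeneous e) (hψ : ∀ i, (ψ i).IsHomogeneous e')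
    (hcop : ∀ q : MvPolynomial (Fin 3) k, (∀ i, q ∣ φ i) → IsUnit q)
    (hbir : ∃ h : MvPolynomial (Fin 3) k, h ≠ 0 ∧ ∀ i, aeval φ (ψ i) = h * X i)
    (g : Fin 5 → MvPolynomial (Fin 3) k) (hg : ∀ j, (g j).IsHomogeneous 3)
    (hbpf : ∀ x : Fin 3 → k, x ≠ 0 → ∃ j, eval x (g j) ≠ 0)
    (hsurf : ∃ j₁ j₂ j₃ : Fin 5, AlgebraicIndependent k ![g j₁, g j₂, g j₃])
    (hinv : ∃ c : MvPolynomial (Fin 3) k, c ≠ 0 ∧ ∀ j, aeval φ (g j) = c * g j) :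
    e = 1 ∧ ∃ M : Matrix (Fin 3) (Fin 3) k, IsUnit M.det ∧
      ∀ i, φ i = ∑ j : Fin 3, C (M i j) * X j :=
  stmt_10_general k e φ hφ hcop g hg hbpf hinv
end

section
/- Let F : ℙ⁴ ⇢ ℙ⁴ be a rational map given by five homogeneous polynomials F₀,…,F₄ of degree 3 with no common factor, and suppose F⁻¹(Y) = X + H as divisors, where Y is a cubic hypersurface, X a quintic, and H a quartic with X and the indeterminacy locus V(F₀,…,F₄) disjoint. If L ⊂ ℙ⁴ is a line meeting V(F₀,…,F₄) in a nonempty scheme that is not a single reduced point, then L ⊂ H. -/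
/-!
On the line `L`, write `Fᵢ|_L = q·gᵢ` with `deg q ≥ 2`. Homogeneity of `G` gives
`P|_L · K|_L = G(F)|_L = q³·G(g)`. A prime factor of `q` vanishes at some nonzero point of `L`
(Nullstellensatz), which then lies on `V(F₀,…,F₄)` and hence off `X`; so `q` is prime to `P|_L`
and `q³ ∣ K|_L`. As `deg K|_L ≤ 4 < 6 ≤ deg q³`, this forces `K|_L = 0`.
-/

open MvPolynomial

namespace MvPolynomial

theorem IsHomogeneous.aeval_const_mul {σ R S : Type*} [Fintype σ] [CommSemiring R]
    [CommSemiring S] [Algebra R S] {φ : MvPolynomial σ R} {n : ℕ} (hφ : φ.IsHomogeneous n)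
    (c : S) (x : σ → S) :
    MvPolynomial.aeval (fun i => c * x i) φ = c ^ n * MvPolynomial.aeval x φ := by
  simp only [aeval_def, eval₂_eq', Finset.mul_sum]
  refine Finset.sum_congr rfl fun d hd => ?_
  have hdeg : ∑ i, d i = n := by
    rw [← hφ (mem_support_iff.mp hd), Finsupp.weight_apply, Finsupp.sum_fintype _ _ (by simp)]
    simp
  simp_rw [mul_pow, Finset.prod_mul_distrib, Finset.prod_pow_eq_pow_sum, hdeg]
  ring

theorem totalDegree_pow_of_isDomain {σ R : Type*} [CommRing R] [IsDomain R]
    {q : MvPolynomial σ R} (hq : q ≠ 0) (n : ℕ) : (q ^ n).totalDegree = n * q.totalDegree := by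
  induction n with
  | zero => simp
  | succ n ih => rw [pow_succ, totalDegree_mul_of_isDomain (pow_ne_zero n hq) hq, ih, add_one_mul]

theorem eq_zero_of_pow_dvd_of_totalDegree_lt {σ R : Type*} [CommRing R] [IsDomain R]
    {p q : MvPolynomial σ R} {n : ℕ} (hdvd : q ^ n ∣ p)
    (hlt : p.totalDegree < n * q.totalDegree) : p = 0 := by
  by_contra hp
  have hq : q ≠ 0 := by rintro rfl; simp at hlt
  have := totalDegree_le_of_dvd_of_isDomain hdvd hp
  rw [totalDegree_pow_of_isDomain hq] at this
  omega

theorem exists_ne_zero_eval_eq_zero_of_prime {σ k : Type*} [Finite σ] [Field k] [IsAlgClosed k]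
    {i j : σ} (hij : i ≠ j) {r : MvPolynomial σ k} (hr : Prime r) :
    ∃ v ≠ 0, eval v r = 0 := by
  by_contra! h
  have hdvd_X : ∀ l, r ∣ X l := by
    intro l
    have hmem : X l ∈ (Ideal.span {r}).radical := by
      rw [← vanishingIdeal_zeroLocus_eq_radical (K := k), mem_vanishingIdeal_iff]
      intro v hv
      by_contra hXv
      have hv0 : v ≠ 0 := fun h0 => hXv (by simp [h0])
      exact h v hv0 ((mem_zeroLocus_iff.mp hv) r (Ideal.mem_span_singleton_self r))
    obtain ⟨m, hm⟩ := hmem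
    exact hr.dvd_of_dvd_pow (Ideal.mem_span_singleton.mp hm)
  have hassoc : Associated (X i) r :=
    ((X_prime.irreducible).dvd_iff.mp (hdvd_X i)).resolve_left hr.not_isUnit
  exact hij (X_dvd_X.mp (hassoc.dvd.trans (hdvd_X j)))

section Line

variable {σ k : Type*} [Field k]

noncomputable def line (a b : σ → k) : σ → MvPolynomial (Fin 2) k :=
  fun j => C (a j) * X 0 + C (b j) * X 1

theorem eval_aeval_line (a b : σ → k) (v : Fin 2 → k) (p : MvPolynomial σ k) :
    eval v (aeval (line a b) p) = eval (v 0 • a + v 1 • b) p := by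
  change aeval v (aeval (line a b) p) = aeval (v 0 • a + v 1 • b) p
  rw [comp_aeval_apply]
  congr
  funext j
  simp [line, mul_comm]

theorem IsHomogeneous.aeval_line {p : MvPolynomial σ k} {n : ℕ} (hp : p.IsHomogeneous n)
    (a b : σ → k) : (MvPolynomial.aeval (line a b) p).IsHomogeneous n := by
  simpa using hp.aeval (line a b) fun j =>
    ((isHomogeneous_X k 0).C_mul (a j)).add ((isHomogeneous_X k 1).C_mul (b j))

theorem smul_add_smul_ne_zero {a b : σ → k} (hab : LinearIndependent k ![a, b])
    {v : Fin 2 → k} (hv : v ≠ 0) : v 0 • a + v 1 • b ≠ 0 := by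
  intro h
  obtain ⟨h0, h1⟩ := LinearIndependent.pair_iff.mp hab _ _ h
  exact hv (by ext i; fin_cases i <;> simp [h0, h1])

theorem isRelPrime_aeval_line [IsAlgClosed k] {ι : Type*} [Finite σ] {F : ι → MvPolynomial σ k}
    {P : MvPolynomial σ k} (hdisj : ∀ x : σ → k, x ≠ 0 → (∀ i, eval x (F i) = 0) → eval x P ≠ 0)
    {a b : σ → k} (hab : LinearIndependent k ![a, b]) {q : MvPolynomial (Fin 2) k} (hq0 : q ≠ 0)
    (hq : ∀ i, q ∣ aeval (line a b) (F i)) : IsRelPrime q (aeval (line a b) P) := by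
  refine (UniqueFactorizationMonoid.isRelPrime_iff_no_prime_factors hq0).mpr
    fun d hdq hdP hd => ?_
  obtain ⟨v, hv0, hv⟩ := exists_ne_zero_eval_eq_zero_of_prime zero_ne_one hd
  have eval_eq_zero {p} (hdp : d ∣ p) : eval v p = 0 := by
    obtain ⟨c, rfl⟩ := hdp
    simp [hv]
  refine hdisj _ (smul_add_smul_ne_zero hab hv0) (fun i => ?_) ?_
  · rw [← eval_aeval_line]
    exact eval_eq_zero (hdq.trans (hq i))
  · rw [← eval_aeval_line]
    exact eval_eq_zero hdP

end Line

end MvPolynomial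

theorem stmt_15_general (k : Type*) [Field k] [IsAlgClosed k]
    (F : Fin 5 → MvPolynomial (Fin 5) k)
    (G P K : MvPolynomial (Fin 5) k)
    (hG : G.IsHomogeneous 3) (hK : K.IsHomogeneous 4)
    (hfac : aeval F G = P * K)
    (hdisj : ∀ x : Fin 5 → k, x ≠ 0 → (∀ i, eval x (F i) = 0) → eval x P ≠ 0)
    (a b : Fin 5 → k) (hab : LinearIndependent k ![a, b])
    (hq : ∃ q : MvPolynomial (Fin 2) k, 2 ≤ q.totalDegree ∧
      ∀ i, q ∣ aeval (fun j : Fin 5 => C (a j) * X (0 : Fin 2) + C (b j) * X 1) (F i)) :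
    ∀ s t : k, eval (fun j => s * a j + t * b j) K = 0 := by
  intro s t
  obtain ⟨q, hq2, hqF⟩ := hq
  have hq0 : q ≠ 0 := by
    rintro rfl
    simp at hq2
  choose g hg using hqF
  have hdvd : q ^ 3 ∣ aeval (line a b) P * aeval (line a b) K := by
    refine ⟨aeval g G, ?_⟩
    rw [← map_mul, ← hfac, comp_aeval_apply, ← hG.aeval_const_mul]
    exact congrArg (aeval · G) (funext hg)
  have hrel : IsRelPrime q (aeval (line a b) P) :=
    isRelPrime_aeval_line hdisj hab hq0 fun i => Dvd.intro _ (hg i).symm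
  have hK0 : aeval (line a b) K = 0 := by
    refine eq_zero_of_pow_dvd_of_totalDegree_lt (hrel.pow_left.dvd_of_dvd_mul_left hdvd) ?_
    have := (hK.aeval_line a b).totalDegree_le
    omega
  have := eval_aeval_line a b ![s, t] K
  rw [hK0, map_zero] at this
  exact this.symm

/-- (Lemma 3.12.)  Let `F : ℙ⁴ ⇢ ℙ⁴` be given by quintuple `F₀,…,F₄` of
homogeneous cubics with no common factor, with `F⁻¹(Y) = X + H`: `G(F₀,…,F₄) = P·K` where
`G` is the cubic equation of `Y`, `P` the quintic equation of `X`, `K` the quartic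
equation of `H`, and `X` disjoint from the indeterminacy locus `V(F₀,…,F₄)`.  If a line
`L` (spanned by independent points `a, b`) meets `V(F₀,…,F₄)` in a nonempty subscheme that
is not a single reduced point — i.e. the restrictions of the `Fᵢ` to `L` have a common
factor of degree `≥ 2` — then `L ⊆ H`. -/
theorem stmt_15 (k : Type*) [Field k] [IsAlgClosed k] [CharZero k]
    (F : Fin 5 → MvPolynomial (Fin 5) k) (hF : ∀ i, (F i).IsHomogeneous 3)
    (hcop : ∀ q : MvPolynomial (Fin 5) k, (∀ i, q ∣ F i) → IsUnit q)
    (G P K : MvPolynomial (Fin 5) k)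
    (hG : G.IsHomogeneous 3) (hP : P.IsHomogeneous 5) (hK : K.IsHomogeneous 4)
    (hfac : aeval F G = P * K)
    (hdisj : ∀ x : Fin 5 → k, x ≠ 0 → (∀ i, eval x (F i) = 0) → eval x P ≠ 0)
    (a b : Fin 5 → k) (hab : LinearIndependent k ![a, b])
    (hq : ∃ q : MvPolynomial (Fin 2) k, 2 ≤ q.totalDegree ∧
      ∀ i, q ∣ aeval (fun j : Fin 5 => C (a j) * X (0 : Fin 2) + C (b j) * X 1) (F i)) :
    ∀ s t : k, eval (fun j => s * a j + t * b j) K = 0 :=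
  stmt_15_general k F G P K hG hK hfac hdisj a b hab hq
end
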